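/- arXiv:0804.4019 — 5 statements merged into one kernel-verified Lean document; each statement's English description precedes it below -/
import Mathlib

section
/- Fix n ≥ 2. Let (V, →) be a countably infinite directed graph (→ irreflexive and asymmetric) containing no independent set of size n (no n vertices pairwise non-adjacent) and having the extension property: for all pairwise disjoint finite sets A, B, C ⊆ V such that C contains no independent set of size n−1, there exists x ∈ V \ (A ∪ B ∪ C) with x → a for all a ∈ A, b → x for all b ∈ B, and x non-adjacent to every c ∈ C (neither x → c nor c → x). (Such a directed graph is the generic digraph 𝔻ₙ omitting an independent set of size n.) Then its distinguishing number is 2: there exists a coloring c : V → Bool such that the only automorphism g with c ∘ g = c is the identity, while a nontrivial automorphism exists. -/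
namespace GD14

variable {V : Type*}

/-- Invariant for a finite partial isomorphism given as a list of pairs. -/
def Inv (R : V → V → Prop) (L : List (V × V)) : Prop :=
  (∀ p ∈ L, ∀ q ∈ L, (p.1 = q.1 ↔ p.2 = q.2)) ∧
  (∀ p ∈ L, ∀ q ∈ L, (R p.1 q.1 ↔ R p.2 q.2))

theorem inv_swap {R : V → V → Prop} {L : List (V × V)} (h : Inv R L) :
    Inv R (L.map Prod.swap) := by
  constructor
  · intro p hp q hq
    simp only [List.mem_map] at hp hq
    obtain ⟨p', hp', rfl⟩ := hp; obtain ⟨q', hq', rfl⟩ := hq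
    exact (h.1 p' hp' q' hq').symm
  · intro p hp q hq
    simp only [List.mem_map] at hp hq
    obtain ⟨p', hp', rfl⟩ := hp; obtain ⟨q', hq', rfl⟩ := hq
    exact (h.2 p' hp' q' hq').symm

theorem forth (n : ℕ) (hn : 2 ≤ n) (R : V → V → Prop)
    (hirr : ∀ x, ¬ R x x) (hasym : ∀ x y, R x y → ¬ R y x)
    (hindep : ¬ ∃ S : Finset V, S.card = n ∧
      ∀ x ∈ S, ∀ y ∈ S, x ≠ y → ¬ R x y ∧ ¬ R y x)
    (hext : ∀ A B C : Finset V, Disjoint A B → Disjoint A C → Disjoint B C →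
      (¬ ∃ S ⊆ C, S.card = n - 1 ∧ ∀ x ∈ S, ∀ y ∈ S, x ≠ y → ¬ R x y ∧ ¬ R y x) →
      ∃ x, x ∉ A ∧ x ∉ B ∧ x ∉ C ∧ (∀ a ∈ A, R x a) ∧ (∀ b ∈ B, R b x) ∧
        ∀ c ∈ C, ¬ R x c ∧ ¬ R c x)
    {L : List (V × V)} (hL : Inv R L) (v : V) (hv : v ∉ L.map Prod.fst) :
    ∃ x, Inv R ((v, x) :: L) := by
  classical
  set A := (L.toFinset.filter fun p => R v p.1).image Prod.snd with hA
  set B := (L.toFinset.filter fun p => R p.1 v).image Prod.snd with hB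
  set C := (L.toFinset.filter fun p => ¬ R v p.1 ∧ ¬ R p.1 v).image Prod.snd with hC
  have hfun : ∀ p ∈ L, ∀ q ∈ L, p.2 = q.2 → p.1 = q.1 :=
    fun p hp q hq h => (hL.1 p hp q hq).mpr h
  have memA : ∀ {x}, x ∈ A ↔ ∃ p ∈ L, R v p.1 ∧ p.2 = x := by
    intro x; simp [hA, Finset.mem_image, Finset.mem_filter, List.mem_toFinset]
  have memB : ∀ {x}, x ∈ B ↔ ∃ p ∈ L, R p.1 v ∧ p.2 = x := by
    intro x; simp [hB, Finset.mem_image, Finset.mem_filter, List.mem_toFinset]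
  have memC : ∀ {x}, x ∈ C ↔ ∃ p ∈ L, (¬ R v p.1 ∧ ¬ R p.1 v) ∧ p.2 = x := by
    intro x; simp [hC, Finset.mem_image, Finset.mem_filter, List.mem_toFinset]
  have dAB : Disjoint A B := by
    rw [Finset.disjoint_left]
    intro x hxA hxB
    obtain ⟨p, hp, hpv, hpx⟩ := memA.mp hxA
    obtain ⟨q, hq, hqv, hqx⟩ := memB.mp hxB
    have : p.1 = q.1 := hfun p hp q hq (hpx.trans hqx.symm)
    exact hasym _ _ hpv (this ▸ hqv)
  have dAC : Disjoint A C := by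
    rw [Finset.disjoint_left]
    intro x hxA hxC
    obtain ⟨p, hp, hpv, hpx⟩ := memA.mp hxA
    obtain ⟨q, hq, hqv, hqx⟩ := memC.mp hxC
    have : p.1 = q.1 := hfun p hp q hq (hpx.trans hqx.symm)
    exact hqv.1 (this ▸ hpv)
  have dBC : Disjoint B C := by
    rw [Finset.disjoint_left]
    intro x hxB hxC
    obtain ⟨p, hp, hpv, hpx⟩ := memB.mp hxB
    obtain ⟨q, hq, hqv, hqx⟩ := memC.mp hxC
    have : p.1 = q.1 := hfun p hp q hq (hpx.trans hqx.symm)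
    exact hqv.2 (this ▸ hpv)
  have pre : ¬ ∃ S ⊆ C, S.card = n - 1 ∧
      ∀ x ∈ S, ∀ y ∈ S, x ≠ y → ¬ R x y ∧ ¬ R y x := by
    rintro ⟨S, hSC, hScard, hSind⟩
    set Fl := L.toFinset.filter fun p => p.2 ∈ S with hFl
    set T := Fl.image Prod.fst with hT
    have memFl : ∀ {p}, p ∈ Fl ↔ p ∈ L ∧ p.2 ∈ S := by
      intro p; simp [hFl, Finset.mem_filter, List.mem_toFinset]
    have hTcard : T.card = Fl.card := by
      apply Finset.card_image_of_injOn
      intro p hp q hq h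
      have hp' := memFl.mp hp; have hq' := memFl.mp hq
      have h2 : p.2 = q.2 := (hL.1 p hp'.1 q hq'.1).mp h
      exact Prod.ext h h2
    have hScard' : S.card = Fl.card := by
      have himg : Fl.image Prod.snd = S := by
        apply Finset.Subset.antisymm
        · intro x hx
          obtain ⟨p, hp, rfl⟩ := Finset.mem_image.mp hx
          exact (memFl.mp hp).2
        · intro x hx
          obtain ⟨p, hp, hnadj, hpx⟩ := memC.mp (hSC hx)
          exact Finset.mem_image.mpr ⟨p, memFl.mpr ⟨hp, hpx ▸ hx⟩, hpx⟩
      calc S.card = (Fl.image Prod.snd).card := by rw [himg]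
        _ = Fl.card := Finset.card_image_of_injOn
            (fun p hp q hq h => Prod.ext ((hL.1 p (memFl.mp hp).1 q (memFl.mp hq).1).mpr h) h)
    have hvT : v ∉ T := by
      intro hv'
      obtain ⟨p, hp, hpv⟩ := Finset.mem_image.mp hv'
      exact hv (List.mem_map.mpr ⟨p, (memFl.mp hp).1, hpv⟩)
    have hTnadj : ∀ y ∈ T, ¬ R v y ∧ ¬ R y v := by
      intro y hy
      obtain ⟨p, hp, rfl⟩ := Finset.mem_image.mp hy
      obtain ⟨hpL, hpS⟩ := memFl.mp hp
      obtain ⟨q, hq, hqnadj, hqp⟩ := memC.mp (hSC hpS)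
      have : q.1 = p.1 := hfun q hq p hpL hqp
      exact ⟨fun h => hqnadj.1 (this ▸ h), fun h => hqnadj.2 (this ▸ h)⟩
    apply hindep
    refine ⟨insert v T, ?_, ?_⟩
    · have h1 : T.card = n - 1 := by rw [hTcard, ← hScard', hScard]
      rw [Finset.card_insert_of_notMem hvT, h1]
      omega
    · intro x hx y hy hxy
      rcases Finset.mem_insert.mp hx with rfl | hxT
      · rcases Finset.mem_insert.mp hy with rfl | hyT
        · exact absurd rfl hxy
        · exact hTnadj y hyT
      · rcases Finset.mem_insert.mp hy with rfl | hyT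
        · exact ⟨(hTnadj x hxT).2, (hTnadj x hxT).1⟩
        · obtain ⟨p, hp, rfl⟩ := Finset.mem_image.mp hxT
          obtain ⟨q, hq, rfl⟩ := Finset.mem_image.mp hyT
          obtain ⟨hpL, hpS⟩ := memFl.mp hp
          obtain ⟨hqL, hqS⟩ := memFl.mp hq
          have h2 : p.2 ≠ q.2 := fun h => hxy (hfun p hpL q hqL h)
          obtain ⟨h1, h2'⟩ := hSind p.2 hpS q.2 hqS h2
          exact ⟨fun h => h1 ((hL.2 p hpL q hqL).mp h),
                 fun h => h2' ((hL.2 q hqL p hpL).mp h)⟩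
  obtain ⟨x, hxA, hxB, hxC, relA, relB, relC⟩ := hext A B C dAB dAC dBC pre
  refine ⟨x, ?_, ?_⟩
  · intro p hp q hq
    rcases List.mem_cons.mp hp with rfl | hp' <;>
      rcases List.mem_cons.mp hq with rfl | hq'
    · simp
    · simp only
      constructor
      · intro h; exact absurd (List.mem_map.mpr ⟨q, hq', h.symm⟩) hv
      · intro h
        rcases (by tauto : R v q.1 ∨ R q.1 v ∨ (¬ R v q.1 ∧ ¬ R q.1 v)) with h1 | h1 | h1
        · exact absurd (h ▸ memA.mpr ⟨q, hq', h1, rfl⟩) hxA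
        · exact absurd (h ▸ memB.mpr ⟨q, hq', h1, rfl⟩) hxB
        · exact absurd (h ▸ memC.mpr ⟨q, hq', h1, rfl⟩) hxC
    · simp only
      constructor
      · intro h; exact absurd (List.mem_map.mpr ⟨p, hp', h⟩) hv
      · intro h
        rcases (by tauto : R v p.1 ∨ R p.1 v ∨ (¬ R v p.1 ∧ ¬ R p.1 v)) with h1 | h1 | h1
        · exact absurd (h ▸ memA.mpr ⟨p, hp', h1, rfl⟩) hxA
        · exact absurd (h ▸ memB.mpr ⟨p, hp', h1, rfl⟩) hxB
        · exact absurd (h ▸ memC.mpr ⟨p, hp', h1, rfl⟩) hxC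
    · exact hL.1 p hp' q hq'
  · intro p hp q hq
    rcases List.mem_cons.mp hp with rfl | hp' <;>
      rcases List.mem_cons.mp hq with rfl | hq'
    · exact iff_of_false (hirr v) (hirr x)
    · simp only
      by_cases h1 : R v q.1
      · exact iff_of_true h1 (relA _ (memA.mpr ⟨q, hq', h1, rfl⟩))
      · by_cases h2 : R q.1 v
        · exact iff_of_false h1 (hasym _ _ (relB _ (memB.mpr ⟨q, hq', h2, rfl⟩)))
        · exact iff_of_false h1 (relC _ (memC.mpr ⟨q, hq', ⟨h1, h2⟩, rfl⟩)).1
    · simp only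
      by_cases h2 : R p.1 v
      · exact iff_of_true h2 (relB _ (memB.mpr ⟨p, hp', h2, rfl⟩))
      · by_cases h1 : R v p.1
        · exact iff_of_false h2 (hasym _ _ (relA _ (memA.mpr ⟨p, hp', h1, rfl⟩)))
        · exact iff_of_false h2 (relC _ (memC.mpr ⟨p, hp', ⟨h1, h2⟩, rfl⟩)).2
    · exact hL.2 p hp' q hq'



theorem extend (n : ℕ) (hn : 2 ≤ n) (R : V → V → Prop)
    (hirr : ∀ x, ¬ R x x) (hasym : ∀ x y, R x y → ¬ R y x)
    (hindep : ¬ ∃ S : Finset V, S.card = n ∧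
      ∀ x ∈ S, ∀ y ∈ S, x ≠ y → ¬ R x y ∧ ¬ R y x)
    (hext : ∀ A B C : Finset V, Disjoint A B → Disjoint A C → Disjoint B C →
      (¬ ∃ S ⊆ C, S.card = n - 1 ∧ ∀ x ∈ S, ∀ y ∈ S, x ≠ y → ¬ R x y ∧ ¬ R y x) →
      ∃ x, x ∉ A ∧ x ∉ B ∧ x ∉ C ∧ (∀ a ∈ A, R x a) ∧ (∀ b ∈ B, R b x) ∧
        ∀ c ∈ C, ¬ R x c ∧ ¬ R c x)
    {L : List (V × V)} (hL : Inv R L) (v : V) :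
    ∃ L', (∀ q ∈ L, q ∈ L') ∧ Inv R L' ∧
      v ∈ L'.map Prod.fst ∧ v ∈ L'.map Prod.snd := by
  classical
  obtain ⟨L1, hsub1, hL1, hfst1⟩ :
      ∃ L1, (∀ q ∈ L, q ∈ L1) ∧ Inv R L1 ∧ v ∈ L1.map Prod.fst := by
    by_cases h : v ∈ L.map Prod.fst
    · exact ⟨L, fun q hq => hq, hL, h⟩
    · obtain ⟨x, hx⟩ := forth n hn R hirr hasym hindep hext hL v h
      exact ⟨(v, x) :: L, fun q hq => List.mem_cons_of_mem _ hq, hx, by simp⟩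
  by_cases h : v ∈ L1.map Prod.snd
  · exact ⟨L1, hsub1, hL1, hfst1, h⟩
  · have hsw : Inv R (L1.map Prod.swap) := inv_swap hL1
    have h' : v ∉ (L1.map Prod.swap).map Prod.fst := by
      simpa [List.map_map, Function.comp] using h
    obtain ⟨x, hx⟩ := forth n hn R hirr hasym hindep hext hsw v h'
    have hx2 : Inv R (((v, x) :: L1.map Prod.swap).map Prod.swap) := inv_swap hx
    have heq : ((v, x) :: L1.map Prod.swap).map Prod.swap = (x, v) :: L1 := by
      simp [List.map_map, Prod.swap_swap_eq]
    rw [heq] at hx2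
    refine ⟨(x, v) :: L1, fun q hq => List.mem_cons_of_mem _ (hsub1 q hq), hx2, ?_, by simp⟩
    rw [List.map_cons]
    exact List.mem_cons_of_mem _ hfst1

theorem step (n : ℕ) (hn : 2 ≤ n) (R : V → V → Prop)
    (hext : ∀ A B C : Finset V, Disjoint A B → Disjoint A C → Disjoint B C →
      (¬ ∃ S ⊆ C, S.card = n - 1 ∧ ∀ x ∈ S, ∀ y ∈ S, x ≠ y → ¬ R x y ∧ ¬ R y x) →
      ∃ x, x ∉ A ∧ x ∉ B ∧ x ∉ C ∧ (∀ a ∈ A, R x a) ∧ (∀ b ∈ B, R b x) ∧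
        ∀ c ∈ C, ¬ R x c ∧ ¬ R c x)
    (a b : V) (L : List V) :
    ∃ x, x ∉ L ∧ (∀ l ∈ L, R l x) ∧
      (a ≠ b → a ∉ L → b ∉ L → R x a ∧ R b x) := by
  classical
  have pre : ∀ C : Finset V, C = ∅ → ¬ ∃ S ⊆ C, S.card = n - 1 ∧
      ∀ x ∈ S, ∀ y ∈ S, x ≠ y → ¬ R x y ∧ ¬ R y x := by
    rintro C rfl ⟨S, hS, hc, -⟩
    have : S = ∅ := Finset.subset_empty.mp hS
    subst this
    simp only [Finset.card_empty] at hc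
    omega
  by_cases h : a ≠ b ∧ a ∉ L ∧ b ∉ L
  · obtain ⟨hab, haL, hbL⟩ := h
    have dAB : Disjoint ({a} : Finset V) (insert b L.toFinset) := by
      simp only [Finset.disjoint_singleton_left, Finset.mem_insert, List.mem_toFinset]
      tauto
    obtain ⟨x, hxA, hxB, -, relA, relB, -⟩ :=
      hext {a} (insert b L.toFinset) ∅ dAB (by simp) (by simp) (pre ∅ rfl)
    refine ⟨x, ?_, ?_, fun _ _ _ => ⟨relA a (by simp), relB b (by simp)⟩⟩
    · intro hx
      exact hxB (Finset.mem_insert_of_mem (List.mem_toFinset.mpr hx))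
    · intro l hl
      exact relB l (Finset.mem_insert_of_mem (List.mem_toFinset.mpr hl))
  · obtain ⟨x, -, hxB, -, -, relB, -⟩ :=
      hext ∅ L.toFinset ∅ (by simp) (by simp) (by simp) (pre ∅ rfl)
    exact ⟨x, fun hx => hxB (List.mem_toFinset.mpr hx),
      fun l hl => relB l (List.mem_toFinset.mpr hl),
      fun h1 h2 h3 => absurd ⟨h1, h2, h3⟩ h⟩

noncomputable def chainList (f : ℕ → List V → V) : ℕ → List V
  | 0 => []
  | k + 1 => f k (chainList f k) :: chainList f k

theorem mem_chainList (f : ℕ → List V → V) (k : ℕ) (x : V) :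
    x ∈ chainList f k ↔ ∃ i < k, x = f i (chainList f i) := by
  induction k with
  | zero => simp [chainList]
  | succ k ih =>
    simp only [chainList, List.mem_cons, ih]
    constructor
    · rintro (rfl | ⟨i, hi, rfl⟩)
      · exact ⟨k, Nat.lt_succ_self k, rfl⟩
      · exact ⟨i, Nat.lt_succ_of_lt hi, rfl⟩
    · rintro ⟨i, hi, rfl⟩
      rcases Nat.lt_succ_iff_lt_or_eq.mp hi with hi' | rfl
      · exact Or.inr ⟨i, hi', rfl⟩
      · exact Or.inl rfl

noncomputable def stages (ext : List (V × V) → V → List (V × V))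
    (L0 : List (V × V)) (s : ℕ → V) : ℕ → List (V × V)
  | 0 => L0
  | k + 1 => ext (stages ext L0 s k) (s k)

theorem stages_zero (ext : List (V × V) → V → List (V × V)) (L0 : List (V × V))
    (s : ℕ → V) : stages ext L0 s 0 = L0 := rfl

theorem stages_succ (ext : List (V × V) → V → List (V × V)) (L0 : List (V × V))
    (s : ℕ → V) (k : ℕ) :
    stages ext L0 s (k + 1) = ext (stages ext L0 s k) (s k) := rfl

end GD14

/-- For `n ≥ 2`, the generic digraph `𝔻ₙ` omitting an independent set
of size `n` has distinguishing number 2. -/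
theorem generic_digraph_omitting_independent_set_distinguishing_number_two
    (n : ℕ) (hn : 2 ≤ n) (V : Type*) [Countable V] [Infinite V]
    (R : V → V → Prop)
    (hirr : ∀ x, ¬ R x x) (hasym : ∀ x y, R x y → ¬ R y x)
    (hindep : ¬ ∃ S : Finset V, S.card = n ∧
      ∀ x ∈ S, ∀ y ∈ S, x ≠ y → ¬ R x y ∧ ¬ R y x)
    (hext : ∀ A B C : Finset V, Disjoint A B → Disjoint A C → Disjoint B C →
      (¬ ∃ S ⊆ C, S.card = n - 1 ∧ ∀ x ∈ S, ∀ y ∈ S, x ≠ y → ¬ R x y ∧ ¬ R y x) →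
      ∃ x, x ∉ A ∧ x ∉ B ∧ x ∉ C ∧ (∀ a ∈ A, R x a) ∧ (∀ b ∈ B, R b x) ∧
        ∀ c ∈ C, ¬ R x c ∧ ¬ R c x) :
    (∃ c : V → Bool, ∀ g : V ≃ V, (∀ x y, R x y ↔ R (g x) (g y)) →
        (∀ v, c (g v) = c v) → ∀ v, g v = v) ∧
    (∃ g : V ≃ V, (∀ x y, R x y ↔ R (g x) (g y)) ∧ ∃ v, g v ≠ v) := by
  classical
  constructor
  · -- Part 1: a distinguishing 2-coloring
    obtain ⟨e, he⟩ := exists_surjective_nat (V × V)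
    have hstep : ∀ (k : ℕ) (L : List V), ∃ x, x ∉ L ∧ (∀ l ∈ L, R l x) ∧
        ((e k).1 ≠ (e k).2 → (e k).1 ∉ L → (e k).2 ∉ L → R x (e k).1 ∧ R (e k).2 x) :=
      fun k L => GD14.step n hn R hext (e k).1 (e k).2 L
    set f : ℕ → List V → V := fun k L => (hstep k L).choose with hf
    set d : ℕ → V := fun k => f k (GD14.chainList f k) with hd
    have hspec : ∀ k, d k ∉ GD14.chainList f k ∧
        (∀ l ∈ GD14.chainList f k, R l (d k)) ∧
        ((e k).1 ≠ (e k).2 → (e k).1 ∉ GD14.chainList f k →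
          (e k).2 ∉ GD14.chainList f k → R (d k) (e k).1 ∧ R (e k).2 (d k)) :=
      fun k => (hstep k (GD14.chainList f k)).choose_spec
    have hmem : ∀ (x : V) (k : ℕ), x ∈ GD14.chainList f k ↔ ∃ i < k, x = d i :=
      fun x k => GD14.mem_chainList f k x
    have hchain : ∀ i k, i < k → R (d i) (d k) :=
      fun i k h => (hspec k).2.1 _ ((hmem _ k).mpr ⟨i, h, rfl⟩)
    have hdinj : Function.Injective d := by
      intro i j hij
      by_contra hne
      rcases Nat.lt_or_ge i j with h | h
      · exact hirr (d i) (hij ▸ hchain i j h)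
      · have h' := hchain j i (lt_of_le_of_ne h (Ne.symm hne))
        rw [hij] at h'
        exact hirr _ h'
    refine ⟨fun v => if v ∈ Set.range d then true else false, ?_⟩
    intro g hg hc
    have hgD : ∀ v : V, g v ∈ Set.range d ↔ v ∈ Set.range d := by
      intro v
      have := hc v
      by_cases h1 : v ∈ Set.range d <;> by_cases h2 : g v ∈ Set.range d <;>
        simp [h1, h2] at this ⊢
    have hsig : ∀ k, ∃ m, g (d k) = d m := by
      intro k
      obtain ⟨m, hm⟩ := (hgD (d k)).mpr ⟨k, rfl⟩
      exact ⟨m, hm.symm⟩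
    set σ : ℕ → ℕ := fun k => (hsig k).choose with hσdef
    have hσ : ∀ k, g (d k) = d (σ k) := fun k => (hsig k).choose_spec
    have hmono : StrictMono σ := by
      intro i j h
      have hR : R (d (σ i)) (d (σ j)) := by
        rw [← hσ, ← hσ]; exact (hg _ _).mp (hchain i j h)
      rcases lt_trichotomy (σ i) (σ j) with h' | h' | h'
      · exact h'
      · exact absurd hR (h' ▸ hirr _)
      · exact absurd hR (hasym _ _ (hchain _ _ h'))
    have hsurj : Function.Surjective σ := by
      intro m
      have h1 : g.symm (d m) ∈ Set.range d := by
        by_contra h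
        have := hc (g.symm (d m))
        rw [g.apply_symm_apply] at this
        simp [h, Set.mem_range_self m] at this
      obtain ⟨j, hj⟩ := h1
      refine ⟨j, hdinj ?_⟩
      rw [← hσ, hj, g.apply_symm_apply]
    have hle : ∀ k, k ≤ σ k := by
      intro k
      induction k with
      | zero => exact Nat.zero_le _
      | succ k ih => exact Nat.succ_le_of_lt (lt_of_le_of_lt ih (hmono (Nat.lt_succ_self k)))
    have hid : ∀ k, σ k = k := by
      intro k
      induction k using Nat.strong_induction_on with
      | _ k ih =>
        obtain ⟨m, hm⟩ := hsurj k
        rcases lt_trichotomy m k with h | rfl | h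
        · exact absurd (ih m h ▸ hm) (Nat.ne_of_lt h)
        · exact hm
        · exact absurd hm (Nat.ne_of_gt (lt_of_lt_of_le h (hle m)))
    have hfix : ∀ k, g (d k) = d k := fun k => (hσ k).trans (congrArg d (hid k))
    intro v
    by_cases hvD : v ∈ Set.range d
    · obtain ⟨k, rfl⟩ := hvD
      exact hfix k
    · by_contra hne
      have hgvD : g v ∉ Set.range d := fun h => hvD ((hgD v).mp h)
      obtain ⟨k, hk⟩ := he (v, g v)
      have hnin : ∀ x : V, x ∉ Set.range d → x ∉ GD14.chainList f k := by
        intro x hx hmem'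
        obtain ⟨i, _, rfl⟩ := (hmem x k).mp hmem'
        exact hx ⟨i, rfl⟩
      have hsp := (hspec k).2.2
      rw [hk] at hsp
      obtain ⟨hR1, hR2⟩ := hsp (Ne.symm hne) (hnin v hvD) (hnin (g v) hgvD)
      have hR3 : R (d k) (g v) := by
        have := (hg (d k) v).mp hR1
        rwa [hfix k] at this
      exact hasym _ _ hR3 hR2
  · -- Part 2: a nontrivial automorphism by back-and-forth
    obtain ⟨u, w, huw⟩ := exists_pair_ne V
    obtain ⟨s, hs⟩ := exists_surjective_nat V
    have hextT : ∀ (L : List (V × V)) (v : V), ∃ L', (∀ q ∈ L, q ∈ L') ∧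
        (GD14.Inv R L → GD14.Inv R L' ∧ v ∈ L'.map Prod.fst ∧ v ∈ L'.map Prod.snd) := by
      intro L v
      by_cases h : GD14.Inv R L
      · obtain ⟨L', h1, h2, h3, h4⟩ := GD14.extend n hn R hirr hasym hindep hext h v
        exact ⟨L', h1, fun _ => ⟨h2, h3, h4⟩⟩
      · exact ⟨L, fun q hq => hq, fun h' => absurd h' h⟩
    set ext : List (V × V) → V → List (V × V) := fun L v => (hextT L v).choose with hextdef
    set P : ℕ → List (V × V) := fun k => GD14.stages ext [(u, w)] s k with hPdef
    have hPsucc : ∀ k, P (k + 1) = ext (P k) (s k) := fun k => rfl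
    have hstep1 : ∀ k, ∀ q ∈ P k, q ∈ P (k + 1) := by
      intro k q hq
      rw [hPsucc k]
      exact (hextT (P k) (s k)).choose_spec.1 q hq
    have hmono : ∀ {k m : ℕ}, k ≤ m → ∀ q ∈ P k, q ∈ P m := by
      intro k m h
      induction m with
      | zero => intro q hq; rw [Nat.le_zero.mp h] at hq; exact hq
      | succ m ih =>
        rcases Nat.le_succ_iff.mp h with h' | rfl
        · exact fun q hq => hstep1 m _ (ih h' q hq)
        · exact fun q hq => hq
    have hInv : ∀ k, GD14.Inv R (P k) := by
      intro k
      induction k with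
      | zero =>
        constructor
        · intro p hp q hq
          simp only [hPdef, GD14.stages_zero, List.mem_singleton] at hp hq
          subst hp; subst hq; simp
        · intro p hp q hq
          simp only [hPdef, GD14.stages_zero, List.mem_singleton] at hp hq
          subst hp; subst hq
          exact iff_of_false (hirr u) (hirr w)
      | succ k ih =>
        rw [hPsucc k]
        exact ((hextT (P k) (s k)).choose_spec.2 ih).1
    have hdom : ∀ v : V, ∃ x, ∃ k, (v, x) ∈ P k := by
      intro v
      obtain ⟨k, rfl⟩ := hs v
      have h := ((hextT (P k) (s k)).choose_spec.2 (hInv k)).2.1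
      rw [show (hextT (P k) (s k)).choose = P (k + 1) from rfl] at h
      obtain ⟨p, hp, hp1⟩ := List.mem_map.mp h
      exact ⟨p.2, k + 1, by rw [← hp1]; simpa using hp⟩
    have hran : ∀ v : V, ∃ y, ∃ k, (y, v) ∈ P k := by
      intro v
      obtain ⟨k, rfl⟩ := hs v
      have h := ((hextT (P k) (s k)).choose_spec.2 (hInv k)).2.2
      rw [show (hextT (P k) (s k)).choose = P (k + 1) from rfl] at h
      obtain ⟨p, hp, hp2⟩ := List.mem_map.mp h
      exact ⟨p.1, k + 1, by rw [← hp2]; simpa using hp⟩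
    have key1 : ∀ {v x y : V} {k m : ℕ}, (v, x) ∈ P k → (v, y) ∈ P m → x = y := by
      intro v x y k m h1 h2
      have h1' := hmono (le_max_left k m) _ h1
      have h2' := hmono (le_max_right k m) _ h2
      exact ((hInv (max k m)).1 _ h1' _ h2').mp rfl
    have key2 : ∀ {x y v : V} {k m : ℕ}, (x, v) ∈ P k → (y, v) ∈ P m → x = y := by
      intro x y v k m h1 h2
      have h1' := hmono (le_max_left k m) _ h1
      have h2' := hmono (le_max_right k m) _ h2
      exact ((hInv (max k m)).1 _ h1' _ h2').mpr rfl
    set G : V → V := fun v => (hdom v).choose with hGdef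
    have specG : ∀ v, ∃ k, (v, G v) ∈ P k := fun v => (hdom v).choose_spec
    set H : V → V := fun v => (hran v).choose with hHdef
    have specH : ∀ v, ∃ k, (H v, v) ∈ P k := fun v => (hran v).choose_spec
    have hleft : ∀ v, H (G v) = v := by
      intro v
      obtain ⟨k, h1⟩ := specG v
      obtain ⟨m, h2⟩ := specH (G v)
      exact key2 h2 h1
    have hright : ∀ v, G (H v) = v := by
      intro v
      obtain ⟨k, h1⟩ := specH v
      obtain ⟨m, h2⟩ := specG (H v)
      exact key1 h2 h1
    refine ⟨⟨G, H, hleft, hright⟩, ?_, u, ?_⟩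
    · intro x y
      obtain ⟨k, h1⟩ := specG x
      obtain ⟨m, h2⟩ := specG y
      have h1' := hmono (le_max_left k m) _ h1
      have h2' := hmono (le_max_right k m) _ h2
      exact (hInv (max k m)).2 _ h1' _ h2'
    · show G u ≠ u
      have h0 : (u, w) ∈ P 0 := by
        simp [hPdef, GD14.stages_zero]
      obtain ⟨k, h1⟩ := specG u
      rw [key1 h1 h0]
      exact Ne.symm huw
end

section
/- Let V be a countably infinite set carrying two linear orders ≤₁ and ≤₂ with the joint extension property: for all finite sets A₁, B₁, A₂, B₂ ⊆ V such that a <₁ b for all a ∈ A₁, b ∈ B₁ and a <₂ b for all a ∈ A₂, b ∈ B₂, there exists x ∈ V with a <₁ x for all a ∈ A₁, x <₁ b for all b ∈ B₁, a <₂ x for all a ∈ A₂, and x <₂ b for all b ∈ B₂. (Such a structure is the double rationals ℚ₂, the homogeneous structure of two independent dense linear orders.) Then its distinguishing number is 2: there exists a coloring c : V → Bool such that the only automorphism g with c ∘ g = c is the identity, while a nontrivial automorphism exists. -/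
/-!
Colour by membership in the range of a sequence that is strictly increasing for `≤₂` and dense
for `≤₁`; the extension property builds it by enumerating all pairs. An automorphism preserving
the colouring permutes this range and preserves `≤₂` on it, so it induces an automorphism of
`(ℕ, ≤)` and fixes the sequence pointwise; by `≤₁`-density it then fixes every point.
A nontrivial automorphism comes from a back-and-forth construction started at `u ↦ w` with
`u ≠ w`: the extension property places a new point in the cut determined by any finite partial
isomorphism in both orders at once.
-/

open Set

section

variable {α β V : Type*}

theorem exists_equiv_of_back_and_forth [DecidableEq α] [DecidableEq β] [Countable α]
    [Countable β] {P : Finset (α × β) → Prop}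
    (hinj : ∀ p, P p → ∀ q ∈ p, ∀ q' ∈ p, (q.1 = q'.1 ↔ q.2 = q'.2))
    (forth : ∀ p, P p → ∀ a, ∃ b, P (insert (a, b) p))
    (back : ∀ p, P p → ∀ b, ∃ a, P (insert (a, b) p))
    {p₀ : Finset (α × β)} (h₀ : P p₀) :
    ∃ e : α ≃ β, (∀ q ∈ p₀, e q.1 = q.2) ∧ ∀ x y, ∃ p, P p ∧ (x, e x) ∈ p ∧ (y, e y) ∈ p := by
  have := Encodable.ofCountable α
  have := Encodable.ofCountable β
  let D : α ⊕ β → Order.Cofinal {p // P p}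
    | .inl a => ⟨{p | ∃ b, (a, b) ∈ p.1}, fun p => by
        obtain ⟨b, hb⟩ := forth p.1 p.2 a
        exact ⟨⟨_, hb⟩, ⟨b, Finset.mem_insert_self _ _⟩, Finset.subset_insert _ _⟩⟩
    | .inr b => ⟨{p | ∃ a, (a, b) ∈ p.1}, fun p => by
        obtain ⟨a, ha⟩ := back p.1 p.2 b
        exact ⟨⟨_, ha⟩, ⟨a, Finset.mem_insert_self _ _⟩, Finset.subset_insert _ _⟩⟩
  -- the union of this `D`-generic ideal is the graph of `e`
  let I := Order.idealOfCofinals ⟨p₀, h₀⟩ D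
  let Graph : α × β → Prop := fun q => ∃ p ∈ I, q ∈ p.1
  have graph_pair : ∀ q q', Graph q → Graph q' → ∃ p ∈ I, q ∈ p.1 ∧ q' ∈ p.1 := by
    rintro q q' ⟨p, hp, hq⟩ ⟨p', hp', hq'⟩
    obtain ⟨p'', hp'', hle, hle'⟩ := I.directed p hp p' hp'
    exact ⟨p'', hp'', hle hq, hle' hq'⟩
  have graph_inj : ∀ q q', Graph q → Graph q' → (q.1 = q'.1 ↔ q.2 = q'.2) := by
    intro q q' hq hq'
    obtain ⟨p, -, hq, hq'⟩ := graph_pair q q' hq hq'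
    exact hinj p.1 p.2 q hq q' hq'
  have graph_dom : ∀ a, ∃ b, Graph (a, b) := fun a => by
    obtain ⟨p, ⟨b, hb⟩, hpI⟩ := Order.cofinal_meets_idealOfCofinals _ D (.inl a)
    exact ⟨b, p, hpI, hb⟩
  choose f hf using graph_dom
  have f_surj : Function.Surjective f := fun b => by
    obtain ⟨p, ⟨a, ha⟩, hpI⟩ := Order.cofinal_meets_idealOfCofinals _ D (.inr b)
    exact ⟨a, (graph_inj _ _ (hf a) ⟨p, hpI, ha⟩).1 rfl⟩
  have f_inj : Function.Injective f := fun a a' h => (graph_inj _ _ (hf a) (hf a')).2 h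
  refine ⟨Equiv.ofBijective f ⟨f_inj, f_surj⟩, fun q hq => ?_, fun x y => ?_⟩
  · exact (graph_inj _ q (hf q.1) ⟨_, Order.mem_idealOfCofinals _ D, hq⟩).1 rfl
  · obtain ⟨p, -, hx, hy⟩ := graph_pair _ _ (hf x) (hf y)
    exact ⟨p.1, p.2, hx, hy⟩

def PreservesRel (r : α → α → Prop) (s : β → β → Prop) (p : Finset (α × β)) : Prop :=
  ∀ q ∈ p, ∀ q' ∈ p, r q.1 q'.1 ↔ s q.2 q'.2

namespace PreservesRel

variable {r : α → α → Prop} {s : β → β → Prop} {p : Finset (α × β)}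

theorem singleton [Std.Refl r] [Std.Refl s] (a : α) (b : β) : PreservesRel r s {(a, b)} := by
  simp [PreservesRel, refl_of]

theorem image_swap_iff [DecidableEq α] [DecidableEq β] :
    PreservesRel s r (p.image Prod.swap) ↔ PreservesRel r s p := by
  simp only [PreservesRel, Finset.forall_mem_image, Prod.fst_swap, Prod.snd_swap]
  exact forall₂_congr fun _ _ => forall₂_congr fun _ _ => iff_comm

theorem eq_iff_eq [IsPartialOrder α r] [IsPartialOrder β s] (hp : PreservesRel r s p)
    {q q' : α × β} (hq : q ∈ p) (hq' : q' ∈ p) : q.1 = q'.1 ↔ q.2 = q'.2 := by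
  rw [← antisymm_iff (r := r), ← antisymm_iff (r := s), hp q hq q' hq', hp q' hq' q hq]

theorem rel_ne_of_rel_of_rel [IsPartialOrder α r] [IsPartialOrder β s] (hp : PreservesRel r s p)
    {a : α} (ha : ∀ q ∈ p, q.1 ≠ a) {q q' : α × β} (hq : q ∈ p) (hq' : q' ∈ p)
    (h : r q.1 a) (h' : r a q'.1) : s q.2 q'.2 ∧ q.2 ≠ q'.2 := by
  refine ⟨(hp q hq q' hq').1 (trans_of r h h'), fun heq => ha q hq ?_⟩
  have h1 : q.1 = q'.1 := (hp.eq_iff_eq hq hq').2 heq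
  exact antisymm_of r h (h1 ▸ h')

theorem insert [DecidableEq α] [DecidableEq β] [IsLinearOrder α r] [IsLinearOrder β s]
    (hp : PreservesRel r s p) {a : α} {b : β} (ha : ∀ q ∈ p, q.1 ≠ a)
    (hb : ∀ q ∈ p, (r q.1 a → s q.2 b ∧ q.2 ≠ b) ∧ (r a q.1 → s b q.2 ∧ b ≠ q.2)) :
    PreservesRel r s (insert (a, b) p) := by
  have new : ∀ q ∈ p, (r q.1 a ↔ s q.2 b) ∧ (r a q.1 ↔ s b q.2) := by
    intro q hq
    obtain ⟨hlow, hup⟩ := hb q hq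
    rcases total_of r q.1 a with h | h
    · obtain ⟨hs, hne⟩ := hlow h
      exact ⟨iff_of_true h hs, iff_of_false (fun h' => ha q hq (antisymm_of r h h'))
        (fun h' => hne (antisymm_of s hs h'))⟩
    · obtain ⟨hs, hne⟩ := hup h
      exact ⟨iff_of_false (fun h' => ha q hq (antisymm_of r h' h))
        (fun h' => hne (antisymm_of s hs h')), iff_of_true h hs⟩
  intro q hq q' hq'
  rcases Finset.mem_insert.1 hq with rfl | hq <;> rcases Finset.mem_insert.1 hq' with rfl | hq'
  · exact iff_of_true (refl_of r _) (refl_of s _)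
  · exact (new q' hq').2
  · exact (new q hq).1
  · exact hp q hq q' hq'

end PreservesRel

def HasJointExtension (le₁ le₂ : V → V → Prop) : Prop :=
  ∀ A₁ B₁ A₂ B₂ : Finset V,
    (∀ a ∈ A₁, ∀ b ∈ B₁, le₁ a b ∧ a ≠ b) →
    (∀ a ∈ A₂, ∀ b ∈ B₂, le₂ a b ∧ a ≠ b) →
    ∃ x, (∀ a ∈ A₁, le₁ a x ∧ a ≠ x) ∧ (∀ b ∈ B₁, le₁ x b ∧ x ≠ b) ∧
         (∀ a ∈ A₂, le₂ a x ∧ a ≠ x) ∧ (∀ b ∈ B₂, le₂ x b ∧ x ≠ b)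

namespace HasJointExtension

variable {le₁ le₂ : V → V → Prop}

theorem nontrivial (hext : HasJointExtension le₁ le₂) : Nontrivial V := by
  obtain ⟨x, -⟩ := hext ∅ ∅ ∅ ∅ (by simp) (by simp)
  obtain ⟨y, hy, -⟩ := hext {x} ∅ ∅ ∅ (by simp) (by simp)
  exact ⟨x, y, (hy x (Finset.mem_singleton_self x)).2⟩

theorem forth [DecidableEq α] [DecidableEq V] {r₁ r₂ : α → α → Prop} [IsLinearOrder α r₁]
    [IsLinearOrder α r₂] [IsLinearOrder V le₁] [IsLinearOrder V le₂]
    (hext : HasJointExtension le₁ le₂) {p : Finset (α × V)} (hp₁ : PreservesRel r₁ le₁ p)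
    (hp₂ : PreservesRel r₂ le₂ p) (a : α) :
    ∃ b, PreservesRel r₁ le₁ (insert (a, b) p) ∧ PreservesRel r₂ le₂ (insert (a, b) p) := by
  classical
  by_cases hdom : ∃ q ∈ p, q.1 = a
  · obtain ⟨q, hq, rfl⟩ := hdom
    refine ⟨q.2, ?_⟩
    rw [Prod.mk.eta, Finset.insert_eq_of_mem hq]
    exact ⟨hp₁, hp₂⟩
  push Not at hdom
  obtain ⟨b, hb₁, hb₁', hb₂, hb₂'⟩ := hext
    ((p.filter (r₁ ·.1 a)).image Prod.snd) ((p.filter (r₁ a ·.1)).image Prod.snd)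
    ((p.filter (r₂ ·.1 a)).image Prod.snd) ((p.filter (r₂ a ·.1)).image Prod.snd)
    (by
      simp only [Finset.forall_mem_image, Finset.mem_filter, and_imp]
      exact fun q hq h q' hq' h' => hp₁.rel_ne_of_rel_of_rel hdom hq hq' h h')
    (by
      simp only [Finset.forall_mem_image, Finset.mem_filter, and_imp]
      exact fun q hq h q' hq' h' => hp₂.rel_ne_of_rel_of_rel hdom hq hq' h h')
  simp only [Finset.forall_mem_image, Finset.mem_filter, and_imp] at hb₁ hb₁' hb₂ hb₂'
  exact ⟨b, hp₁.insert hdom fun q hq => ⟨hb₁ hq, hb₁' hq⟩,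
    hp₂.insert hdom fun q hq => ⟨hb₂ hq, hb₂' hq⟩⟩

theorem back [DecidableEq V] [DecidableEq β] {s₁ s₂ : β → β → Prop} [IsLinearOrder V le₁]
    [IsLinearOrder V le₂] [IsLinearOrder β s₁] [IsLinearOrder β s₂]
    (hext : HasJointExtension le₁ le₂) {p : Finset (V × β)} (hp₁ : PreservesRel le₁ s₁ p)
    (hp₂ : PreservesRel le₂ s₂ p) (b : β) :
    ∃ a, PreservesRel le₁ s₁ (insert (a, b) p) ∧ PreservesRel le₂ s₂ (insert (a, b) p) := by
  simp only [← PreservesRel.image_swap_iff (p := insert _ p), Finset.image_insert,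
    Prod.swap_prod_mk]
  exact hext.forth (PreservesRel.image_swap_iff.2 hp₁) (PreservesRel.image_swap_iff.2 hp₂) b

theorem exists_seq_increasing_dense [Countable V] [IsLinearOrder V le₁] [IsLinearOrder V le₂]
    (hext : HasJointExtension le₁ le₂) :
    ∃ b : ℕ → V, (∀ m n, m < n → le₂ (b m) (b n) ∧ b m ≠ b n) ∧
      ∀ x y, le₁ x y → x ≠ y → ∃ n, (le₁ x (b n) ∧ x ≠ b n) ∧ (le₁ (b n) y ∧ b n ≠ y) := by
  have := hext.nontrivial
  obtain ⟨e, he⟩ := exists_surjective_nat (V × V)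
  have step : ∀ (v : V) (q : V × V), ∃ w, (le₂ v w ∧ v ≠ w) ∧ (le₁ q.1 q.2 → q.1 ≠ q.2 →
      (le₁ q.1 w ∧ q.1 ≠ w) ∧ (le₁ w q.2 ∧ w ≠ q.2)) := by
    intro v q
    by_cases hq : le₁ q.1 q.2 ∧ q.1 ≠ q.2
    · obtain ⟨w, h1, h2, h3, -⟩ := hext {q.1} {q.2} {v} ∅ (by simpa using hq) (by simp)
      exact ⟨w, by simpa using h3, fun _ _ => ⟨by simpa using h1, by simpa using h2⟩⟩
    · obtain ⟨w, -, -, h3, -⟩ := hext ∅ ∅ {v} ∅ (by simp) (by simp)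
      exact ⟨w, by simpa using h3, fun h h' => absurd ⟨h, h'⟩ hq⟩
  choose next next_above next_between using fun v n => step v (e n)
  let b : ℕ → V := fun n => Nat.rec (Classical.arbitrary V) (fun n w => next w n) n
  have b_le : ∀ m n, m ≤ n → le₂ (b m) (b n) :=
    Nat.rel_of_forall_rel_succ_of_le le₂ fun n => (next_above (b n) n).1
  refine ⟨b, fun m n hmn => ⟨b_le m n hmn.le, fun heq => ?_⟩, fun x y hxy hne => ?_⟩
  · have h : le₂ (b (m + 1)) (b m) := heq ▸ b_le _ _ hmn
    exact (next_above (b m) m).2 (antisymm_of le₂ (b_le _ _ m.le_succ) h)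
  · obtain ⟨n, hn⟩ := he (x, y)
    have between := next_between (b n) n
    rw [hn] at between
    exact ⟨n + 1, between hxy hne⟩

end HasJointExtension

theorem apply_eq_self_of_fixes_dense {ι : Type*} {r : α → α → Prop} [IsLinearOrder α r]
    {f : α → α} (hf : ∀ x y, r x y → r (f x) (f y)) {b : ι → α}
    (hb : ∀ x y, r x y → x ≠ y → ∃ i, (r x (b i) ∧ x ≠ b i) ∧ (r (b i) y ∧ b i ≠ y))
    (hfix : ∀ i, f (b i) = b i) (x : α) : f x = x := by
  by_contra hne
  rcases total_of r x (f x) with h | h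
  · obtain ⟨i, ⟨hxb, -⟩, hbf, hne'⟩ := hb x (f x) h (Ne.symm hne)
    exact hne' (antisymm_of r hbf (hfix i ▸ hf x (b i) hxb))
  · obtain ⟨i, ⟨hfb, hne'⟩, hbx, -⟩ := hb (f x) x h hne
    exact hne' (antisymm_of r hfb (hfix i ▸ hf (b i) x hbx))

theorem apply_seq_eq_self_of_range_invariant {r : α → α → Prop} [IsLinearOrder α r] {b : ℕ → α}
    (hb : ∀ m n, m < n → r (b m) (b n) ∧ b m ≠ b n) {g : α ≃ α}
    (hg : ∀ x y, r x y ↔ r (g x) (g y)) (hrange : ∀ x, g x ∈ range b ↔ x ∈ range b) (n : ℕ) :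
    g (b n) = b n := by
  have b_rel_iff : ∀ m n, r (b m) (b n) ↔ m ≤ n := by
    refine fun m n => ⟨fun h => not_lt.1 fun hnm => (hb n m hnm).2 (antisymm_of r (hb n m hnm).1 h),
      fun h => ?_⟩
    rcases h.eq_or_lt with rfl | h
    exacts [refl_of r _, (hb m n h).1]
  have b_inj : Function.Injective b := fun m n h =>
    le_antisymm ((b_rel_iff m n).1 (h ▸ refl_of r _)) ((b_rel_iff n m).1 (h ▸ refl_of r _))
  choose σ hσ using fun n => (hrange (b n)).2 ⟨n, rfl⟩
  have σ_mono : StrictMono σ := strictMono_of_le_iff_le fun m n => by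
    rw [← b_rel_iff (σ m), hσ, hσ, ← hg, b_rel_iff]
  have σ_surj : Function.Surjective σ := fun n => by
    obtain ⟨m, hm⟩ := (hrange (g.symm (b n))).1 (by simp)
    exact ⟨m, b_inj (by rw [hσ, hm, g.apply_symm_apply])⟩
  have σ_eq : σ n = n :=
    DFunLike.congr_fun (Subsingleton.elim (σ_mono.orderIsoOfSurjective σ σ_surj) (.refl ℕ)) n
  rw [← hσ, σ_eq]

end

theorem double_rationals_distinguishing_number_two_general
    (V : Type*) [Countable V]
    (le₁ le₂ : V → V → Prop)
    (h₁ : IsLinearOrder V le₁) (h₂ : IsLinearOrder V le₂)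
    (hext : ∀ A₁ B₁ A₂ B₂ : Finset V,
      (∀ a ∈ A₁, ∀ b ∈ B₁, le₁ a b ∧ a ≠ b) →
      (∀ a ∈ A₂, ∀ b ∈ B₂, le₂ a b ∧ a ≠ b) →
      ∃ x, (∀ a ∈ A₁, le₁ a x ∧ a ≠ x) ∧ (∀ b ∈ B₁, le₁ x b ∧ x ≠ b) ∧
           (∀ a ∈ A₂, le₂ a x ∧ a ≠ x) ∧ (∀ b ∈ B₂, le₂ x b ∧ x ≠ b)) :
    (∃ c : V → Bool, ∀ g : V ≃ V,
        (∀ x y, (le₁ x y ↔ le₁ (g x) (g y)) ∧ (le₂ x y ↔ le₂ (g x) (g y))) →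
        (∀ v, c (g v) = c v) → ∀ v, g v = v) ∧
    (∃ g : V ≃ V,
        (∀ x y, (le₁ x y ↔ le₁ (g x) (g y)) ∧ (le₂ x y ↔ le₂ (g x) (g y))) ∧
        ∃ v, g v ≠ v) := by
  classical
  have hext : HasJointExtension le₁ le₂ := hext
  constructor
  · obtain ⟨b, b_mono, b_dense⟩ := hext.exists_seq_increasing_dense
    refine ⟨fun v => decide (v ∈ range b), fun g hg hc => ?_⟩
    have hrange : ∀ v, g v ∈ range b ↔ v ∈ range b := fun v => by simpa using hc v
    exact apply_eq_self_of_fixes_dense (fun x y => (hg x y).1.1) b_dense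
      (apply_seq_eq_self_of_range_invariant b_mono (fun x y => (hg x y).2) hrange)
  · obtain ⟨u, w, huw⟩ := hext.nontrivial.exists_pair_ne
    obtain ⟨e, he, he_iso⟩ := exists_equiv_of_back_and_forth
      (P := fun p => PreservesRel le₁ le₁ p ∧ PreservesRel le₂ le₂ p)
      (fun _ hp _ hq _ hq' => hp.1.eq_iff_eq hq hq')
      (fun _ hp a => hext.forth hp.1 hp.2 a) (fun _ hp b => hext.back hp.1 hp.2 b)
      ⟨PreservesRel.singleton u w, PreservesRel.singleton u w⟩
    refine ⟨e, fun x y => ?_, u, ?_⟩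
    · obtain ⟨p, hp, hx, hy⟩ := he_iso x y
      exact ⟨hp.1 _ hx _ hy, hp.2 _ hx _ hy⟩
    · rw [he (u, w) (Finset.mem_singleton_self _)]
      exact huw.symm

/-- The double rationals `ℚ₂` (two independent dense linear orders with
the joint extension property) have distinguishing number 2. -/
theorem double_rationals_distinguishing_number_two
    (V : Type*) [Countable V] [Infinite V]
    (le₁ le₂ : V → V → Prop)
    (h₁ : IsLinearOrder V le₁) (h₂ : IsLinearOrder V le₂)
    (hext : ∀ A₁ B₁ A₂ B₂ : Finset V,
      (∀ a ∈ A₁, ∀ b ∈ B₁, le₁ a b ∧ a ≠ b) →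
      (∀ a ∈ A₂, ∀ b ∈ B₂, le₂ a b ∧ a ≠ b) →
      ∃ x, (∀ a ∈ A₁, le₁ a x ∧ a ≠ x) ∧ (∀ b ∈ B₁, le₁ x b ∧ x ≠ b) ∧
           (∀ a ∈ A₂, le₂ a x ∧ a ≠ x) ∧ (∀ b ∈ B₂, le₂ x b ∧ x ≠ b)) :
    (∃ c : V → Bool, ∀ g : V ≃ V,
        (∀ x y, (le₁ x y ↔ le₁ (g x) (g y)) ∧ (le₂ x y ↔ le₂ (g x) (g y))) →
        (∀ v, c (g v) = c v) → ∀ v, g v = v) ∧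
    (∃ g : V ≃ V,
        (∀ x y, (le₁ x y ↔ le₁ (g x) (g y)) ∧ (le₂ x y ↔ le₂ (g x) (g y))) ∧
        ∃ v, g v ≠ v) :=
  double_rationals_distinguishing_number_two_general V le₁ le₂ h₁ h₂ hext
end

section
/- For n ≥ 2, the distinguishing number of the directed graph C₃[Iₙ] — the wreath product with vertex set Fin 3 × Fin n and edges (i,a) → (j,b) iff j = i + 1 (mod 3) — equals n + 1: there is a distinguishing coloring with n+1 colors and none with n colors. -/
/-- The wreath product `C₃[Iₙ]`: vertex set `Fin 3 × Fin n`, with an edge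
`(i,a) → (j,b)` iff `j = i + 1 (mod 3)`. -/
def C3In_Adj (n : ℕ) (x y : Fin 3 × Fin n) : Prop := y.1 = x.1 + 1

/-!
Since every vertex of layer `i` points to every vertex of layer `i + 1`, an automorphism of
`C₃[Iₙ]` shifts all layers `{i} × Fin n` by one common amount; conversely every permutation that
does so is an automorphism.

With `n + 1` colors, give layer `0` the colors `0, …, n - 1` and the other layers `1, …, n`.
Color `0` occurs only in layer `0`, so a color-preserving automorphism does not shift the layers,
and as colors are distinct within each layer it is the identity.

With `n` colors, either two vertices of one layer share a color and can be swapped, or every layer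
is colored bijectively by `Fin n`; then the colorings identify consecutive layers, which gives a
color-preserving rotation of the three layers.
-/

open Equiv Function

namespace C3In

variable {n : ℕ}

def IsAut (g : Perm (Fin 3 × Fin n)) : Prop :=
  ∀ x y, C3In_Adj n x y ↔ C3In_Adj n (g x) (g y)

theorem IsAut.fst_sub_fst_eq {g : Perm (Fin 3 × Fin n)} (hg : IsAut g) (x y : Fin 3 × Fin n) :
    (g x).1 - x.1 = (g y).1 - y.1 := by
  have step : ∀ i a b, (g (i + 1, b)).1 - (i + 1) = (g (i, a)).1 - i := fun i a b => by
    rw [(hg (i, a) (i + 1, b)).mp rfl, add_sub_add_right_eq_sub]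
  have to_base : ∀ x b, (g x).1 - x.1 = (g (0, b)).1 - 0 := by
    rintro ⟨i, a⟩ b
    fin_cases i
    · simpa using (step 2 b a).trans ((step 1 b b).trans (step 0 b b))
    · simpa using step 0 b a
    · simpa using (step 1 b a).trans (step 0 b b)
  rw [to_base x y.2, to_base y y.2]

theorem isAut_of_fst_eq_add {g : Perm (Fin 3 × Fin n)} (t : Fin 3)
    (hg : ∀ x, (g x).1 = x.1 + t) : IsAut g := fun x y => by
  simp only [C3In_Adj, hg, add_right_comm x.1 t 1, add_left_inj]

theorem exists_perm_fst_eq_add_of_injective {G α : Type*} [AddGroup G] [Finite G] [Finite α]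
    (c : G × α → α) (hc : Injective fun x => (x.1, c x)) (t : G) :
    ∃ g : Perm (G × α), (∀ x, (g x).1 = x.1 + t) ∧ ∀ x, c (g x) = c x := by
  let E : Perm (G × α) := .ofBijective _ (Finite.injective_iff_bijective.mp hc)
  have hE : ∀ x, E (E.symm x) = x := E.apply_symm_apply
  refine ⟨(E.trans ((Equiv.addRight t).prodCongr (.refl α))).trans E.symm, fun x => ?_, fun x => ?_⟩
  · exact congrArg Prod.fst (hE _)
  · exact congrArg Prod.snd (hE _)

def layerColoring (n : ℕ) (x : Fin 3 × Fin n) : Fin (n + 1) :=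
  if x.1 = 0 then x.2.castSucc else x.2.succ

theorem fst_eq_zero_of_layerColoring_eq_zero {x : Fin 3 × Fin n} (hx : layerColoring n x = 0) :
    x.1 = 0 := by
  by_contra h
  simp [layerColoring, h] at hx

theorem injective_fst_layerColoring : Injective fun x => (x.1, layerColoring n x) := by
  rintro ⟨i, a⟩ ⟨j, b⟩ h
  simp only [Prod.mk.injEq, layerColoring] at h
  obtain ⟨rfl, h⟩ := h
  split_ifs at h
  · rw [Fin.castSucc_injective n h]
  · rw [Fin.succ_injective n h]

theorem IsAut.eq_self_of_preserves_layerColoring {g : Perm (Fin 3 × Fin n)} (hg : IsAut g)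
    (hc : ∀ v, layerColoring n (g v) = layerColoring n v) (v : Fin 3 × Fin n) : g v = v := by
  have hfst : ∀ x, (g x).1 = x.1 := by
    let v₀ : Fin 3 × Fin n := (0, ⟨0, v.2.pos⟩)
    have hv₀ : (g v₀).1 = 0 := fst_eq_zero_of_layerColoring_eq_zero (by rw [hc]; rfl)
    intro x
    simpa [v₀, hv₀, sub_eq_zero] using hg.fst_sub_fst_eq x v₀
  exact injective_fst_layerColoring (Prod.ext (hfst v) (hc v))

theorem exists_nontrivial_isAut_preserving (hn : 0 < n) (c : Fin 3 × Fin n → Fin n) :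
    ∃ g : Perm (Fin 3 × Fin n), IsAut g ∧ (∃ v, g v ≠ v) ∧ ∀ v, c (g v) = c v := by
  by_cases hinj : Injective fun x => (x.1, c x)
  · obtain ⟨g, hg, hgc⟩ := exists_perm_fst_eq_add_of_injective c hinj 1
    refine ⟨g, isAut_of_fst_eq_add 1 hg, ⟨(0, ⟨0, hn⟩), fun h => ?_⟩, hgc⟩
    simpa [hg] using congrArg Prod.fst h
  · obtain ⟨x, y, hxy, hne⟩ := not_injective_iff.mp hinj
    have hswap := apply_swap_eq_self (v := fun x => (x.1, c x)) hxy
    refine ⟨swap x y, isAut_of_fst_eq_add 0 fun v => ?_, ⟨x, by simpa using hne.symm⟩,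
      fun v => congrArg Prod.snd (hswap v)⟩
    simpa using congrArg Prod.fst (hswap v)

end C3In

/-- For `n ≥ 2`, the distinguishing number of `C₃[Iₙ]` is `n + 1`:
there is a distinguishing coloring with `n+1` colors and none with `n` colors. -/
theorem C3_wreath_In_distinguishing_number
    (n : ℕ) (hn : 2 ≤ n) :
    (∃ c : Fin 3 × Fin n → Fin (n + 1),
      ∀ g : (Fin 3 × Fin n) ≃ (Fin 3 × Fin n),
        (∀ x y, C3In_Adj n x y ↔ C3In_Adj n (g x) (g y)) →
        (∀ v, c (g v) = c v) → ∀ v, g v = v) ∧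
    (∀ c : Fin 3 × Fin n → Fin n,
      ∃ g : (Fin 3 × Fin n) ≃ (Fin 3 × Fin n),
        (∀ x y, C3In_Adj n x y ↔ C3In_Adj n (g x) (g y)) ∧
        (∃ v, g v ≠ v) ∧ ∀ v, c (g v) = c v) :=
  ⟨⟨C3In.layerColoring n, fun _ => C3In.IsAut.eq_self_of_preserves_layerColoring⟩,
    C3In.exists_nontrivial_isAut_preserving (by omega)⟩
end

section
/- Fix n ≥ 2. Let (T, →) be a countably infinite tournament with the extension property (for all disjoint finite A, B ⊆ T there is x ∉ A ∪ B with x → a for all a ∈ A and b → x for all b ∈ B), and let 𝕋^∞[Iₙ] be the directed graph on T × Fin n with edges (t,a) → (s,b) iff t → s. Then the distinguishing number of 𝕋^∞[Iₙ] equals n + 1: there is a distinguishing coloring with n+1 colors and none with n colors. -/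
/-!
An automorphism of `𝕋^∞[Iₙ]` maps fibres `{t} × Fin n` to fibres: two points of a fibre are
non-adjacent, two points of distinct fibres are adjacent. Hence it induces an automorphism of
the tournament.

With `n` colours, either some fibre repeats a colour, and swapping two such points is a
nontrivial colour-preserving automorphism, or every fibre is coloured bijectively, and then any
nontrivial automorphism of the tournament (which exists by back-and-forth) lifts.

With `n + 1` colours, take a set `D` that no nontrivial automorphism preserves, and colour the
fibres over `D` by `0, …, n - 1` and the others by `1, …, n`. The colour `0` marks the fibres
over `D`, so a colour-preserving automorphism induces an automorphism preserving `D`; it is the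
identity on `T` and then, as fibres are coloured injectively, everywhere. For `D` take an
`R`-increasing sequence `d` such that, for every pair `x ≠ y` with `y ∉ D`, some `d k` lies above
`x` and below `y`. An automorphism preserving `D` fixes it pointwise, as `ω` is rigid; and if it
moved some `y ∉ D`, the `d k` above `f y` and below `y` would also lie below `f y`.
-/

section

open Function Set

variable {α β T : Type*}

def HasExtensionProperty (R : T → T → Prop) : Prop :=
  ∀ A B : Finset T, Disjoint A B →
    ∃ x, x ∉ A ∧ x ∉ B ∧ (∀ a ∈ A, R x a) ∧ (∀ b ∈ B, R b x)

theorem HasExtensionProperty.nontrivial {R : T → T → Prop} (hR : HasExtensionProperty R) :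
    Nontrivial T := by
  obtain ⟨x, -⟩ := hR ∅ ∅ (Finset.disjoint_empty_left _)
  obtain ⟨y, hy, -⟩ := hR {x} ∅ (Finset.disjoint_empty_right _)
  exact ⟨x, y, fun h => hy (by simp [h])⟩

section BackAndForth

variable {R : α → α → Prop} {S : β → β → Prop}

/-- A pair `x : α × β` stands for the assignment `x.1 ↦ x.2` of a partial map. -/
def RelCompatible (R : α → α → Prop) (S : β → β → Prop) (x y : α × β) : Prop :=
  (x.1 = y.1 ↔ x.2 = y.2) ∧ (R x.1 y.1 ↔ S x.2 y.2)

def IsPartialRelIso (R : α → α → Prop) (S : β → β → Prop) (p : Set (α × β)) : Prop :=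
  ∀ x ∈ p, ∀ y ∈ p, RelCompatible R S x y

theorem relCompatible_swap {x y : α × β} :
    RelCompatible S R x.swap y.swap ↔ RelCompatible R S x y := by
  simp only [RelCompatible, Prod.fst_swap, Prod.snd_swap, iff_comm]

theorem relCompatible_self [Std.Irrefl R] [Std.Irrefl S] (x : α × β) : RelCompatible R S x x :=
  ⟨iff_of_true rfl rfl, iff_of_false (irrefl _) (irrefl _)⟩

theorem relCompatible_of_rel [Std.Asymm R] [Std.Asymm S] {a c : α} {b d : β}
    (hac : R a c) (hbd : S b d) :
    RelCompatible R S (a, b) (c, d) ∧ RelCompatible R S (c, d) (a, b) :=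
  ⟨⟨iff_of_false (ne_of_irrefl hac) (ne_of_irrefl hbd), iff_of_true hac hbd⟩,
    ⟨iff_of_false (ne_of_irrefl' hac) (ne_of_irrefl' hbd), iff_of_false (asymm hac) (asymm hbd)⟩⟩

theorem isPartialRelIso_singleton [Std.Irrefl R] [Std.Irrefl S] (x : α × β) :
    IsPartialRelIso R S {x} := by
  rintro _ rfl _ rfl
  exact relCompatible_self _

theorem IsPartialRelIso.insert [Std.Irrefl R] [Std.Irrefl S] {p : Set (α × β)} {x : α × β}
    (hp : IsPartialRelIso R S p) (hx : ∀ y ∈ p, RelCompatible R S x y ∧ RelCompatible R S y x) :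
    IsPartialRelIso R S (insert x p) := by
  rintro y (rfl | hy) z (rfl | hz)
  · exact relCompatible_self _
  · exact (hx z hz).1
  · exact (hx y hy).2
  · exact hp y hy z hz

theorem IsPartialRelIso.exists_compatible_left [Std.Trichotomous R] [Std.Asymm R] [Std.Asymm S]
    (hS : HasExtensionProperty S) {p : Finset (α × β)} (hp : IsPartialRelIso R S p) (a : α) :
    ∃ b, ∀ x ∈ p, RelCompatible R S (a, b) x ∧ RelCompatible R S x (a, b) := by
  classical
  by_cases hdom : ∃ b, (a, b) ∈ p
  · obtain ⟨b, hb⟩ := hdom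
    exact ⟨b, fun x hx => ⟨hp _ hb _ hx, hp _ hx _ hb⟩⟩
  push Not at hdom
  -- `b` must be related to the image of each point of `p` as `a` is related to that point.
  set A := (p.filter fun x => R a x.1).image Prod.snd
  set B := (p.filter fun x => R x.1 a).image Prod.snd
  have hAB : Disjoint A B := by
    simp only [A, B, Finset.disjoint_left, Finset.mem_image, Finset.mem_filter]
    rintro _ ⟨x, ⟨hx, hax⟩, rfl⟩ ⟨y, ⟨hy, hya⟩, hyx⟩
    exact asymm hax ((hp _ hy _ hx).1.2 hyx ▸ hya)
  obtain ⟨b, -, -, hbA, hBb⟩ := hS A B hAB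
  refine ⟨b, fun x hx => ?_⟩
  rcases trichotomous_of R a x.1 with h | h | h
  · exact relCompatible_of_rel h (hbA _ (Finset.mem_image_of_mem _ (Finset.mem_filter.2 ⟨hx, h⟩)))
  · exact absurd (h ▸ hx) (hdom x.2)
  · exact (relCompatible_of_rel h
      (hBb _ (Finset.mem_image_of_mem _ (Finset.mem_filter.2 ⟨hx, h⟩)))).symm

theorem IsPartialRelIso.exists_compatible_right [Std.Trichotomous S] [Std.Asymm R] [Std.Asymm S]
    (hR : HasExtensionProperty R) {p : Finset (α × β)} (hp : IsPartialRelIso R S p) (b : β) :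
    ∃ a, ∀ x ∈ p, RelCompatible R S (a, b) x ∧ RelCompatible R S x (a, b) := by
  classical
  have hp' : IsPartialRelIso S R (p.image Prod.swap : Finset (β × α)) := by
    simp only [IsPartialRelIso, Finset.coe_image, Set.forall_mem_image]
    exact fun x hx y hy => relCompatible_swap.2 (hp x hx y hy)
  obtain ⟨a, ha⟩ := hp'.exists_compatible_left hR b
  exact ⟨a, fun x hx =>
    (ha _ (Finset.mem_image_of_mem _ hx)).imp relCompatible_swap.1 relCompatible_swap.1⟩

theorem IsPartialRelIso.exists_relIso {U : Set (α × β)} (hU : IsPartialRelIso R S U)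
    (hl : ∀ a, ∃ b, (a, b) ∈ U) (hr : ∀ b, ∃ a, (a, b) ∈ U) :
    ∃ f : R ≃r S, ∀ a, (a, f a) ∈ U := by
  choose f hf using hl
  choose g hg using hr
  exact ⟨⟨⟨f, g, fun a => (hU _ (hg (f a)) _ (hf a)).1.2 rfl,
    fun b => (hU _ (hf (g b)) _ (hg b)).1.1 rfl⟩, (hU _ (hf _) _ (hf _)).2.symm⟩, hf⟩

variable (R S) in
abbrev PartialRelIso := {p : Finset (α × β) // IsPartialRelIso R S p}

variable [Std.Trichotomous R] [Std.Asymm R] [Std.Trichotomous S] [Std.Asymm S]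

def PartialRelIso.definedAt (hR : HasExtensionProperty R) (hS : HasExtensionProperty S) :
    α ⊕ β → Order.Cofinal (PartialRelIso R S)
  | .inl a => ⟨{p | ∃ b, (a, b) ∈ p.1}, fun p => by
      classical
      obtain ⟨b, hb⟩ := p.2.exists_compatible_left hS a
      exact ⟨⟨insert (a, b) p.1, by rw [Finset.coe_insert]; exact p.2.insert hb⟩,
        ⟨b, Finset.mem_insert_self _ _⟩, Finset.subset_insert _ _⟩⟩
  | .inr b => ⟨{p | ∃ a, (a, b) ∈ p.1}, fun p => by
      classical
      obtain ⟨a, ha⟩ := p.2.exists_compatible_right hR b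
      exact ⟨⟨insert (a, b) p.1, by rw [Finset.coe_insert]; exact p.2.insert ha⟩,
        ⟨a, Finset.mem_insert_self _ _⟩, Finset.subset_insert _ _⟩⟩

theorem HasExtensionProperty.exists_relIso_apply_eq [Countable α] [Countable β]
    (hR : HasExtensionProperty R) (hS : HasExtensionProperty S) (a : α) (b : β) :
    ∃ f : R ≃r S, f a = b := by
  cases nonempty_encodable α
  cases nonempty_encodable β
  let p₀ : PartialRelIso R S := ⟨{(a, b)}, by
    rw [Finset.coe_singleton]; exact isPartialRelIso_singleton _⟩
  let I := Order.idealOfCofinals p₀ (PartialRelIso.definedAt hR hS)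
  let U : Set (α × β) := {x | ∃ p ∈ I, x ∈ p.1}
  have hU : IsPartialRelIso R S U := by
    rintro x ⟨p, hp, hx⟩ y ⟨q, hq, hy⟩
    obtain ⟨r, -, hpr, hqr⟩ := I.directed _ hp _ hq
    exact r.2 x (hpr hx) y (hqr hy)
  have hmeet (i : α ⊕ β) : ∃ p ∈ I, p ∈ PartialRelIso.definedAt hR hS i := by
    obtain ⟨p, h₁, h₂⟩ := Order.cofinal_meets_idealOfCofinals p₀ _ i
    exact ⟨p, h₂, h₁⟩
  obtain ⟨f, hf⟩ := hU.exists_relIso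
    (fun a => let ⟨p, hp, b, hb⟩ := hmeet (.inl a); ⟨b, p, hp, hb⟩)
    (fun b => let ⟨p, hp, a, ha⟩ := hmeet (.inr b); ⟨a, p, hp, ha⟩)
  have hab : (a, b) ∈ U := ⟨p₀, Order.mem_idealOfCofinals p₀ _, Finset.mem_singleton_self _⟩
  exact ⟨f, (hU _ (hf a) _ hab).1.1 rfl⟩

end BackAndForth

namespace HasExtensionProperty

variable {R : T → T → Prop} (hR : HasExtensionProperty R)

noncomputable def next (s : Finset T) (x y : T) : T :=
  open Classical in (hR ({y} \ insert x s) (insert x s) Finset.sdiff_disjoint).choose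

theorem rel_next (s : Finset T) (x y : T) :
    (∀ b ∈ s, R b (hR.next s x y)) ∧ R x (hR.next s x y) ∧
      (y ≠ x → y ∉ s → R (hR.next s x y) y) := by
  classical
  obtain ⟨-, -, hA, hB⟩ := (hR ({y} \ insert x s) (insert x s) Finset.sdiff_disjoint).choose_spec
  exact ⟨fun b hb => hB b (Finset.mem_insert_of_mem hb), hB x (Finset.mem_insert_self x s),
    fun hyx hys => hA y (by simp [hyx, hys])⟩

noncomputable def chainPrefix (e : ℕ → T × T) : ℕ → Finset T
  | 0 => ∅
  | k + 1 =>
    open Classical in insert (hR.next (chainPrefix e k) (e k).1 (e k).2) (chainPrefix e k)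

noncomputable def chain (e : ℕ → T × T) (k : ℕ) : T :=
  hR.next (hR.chainPrefix e k) (e k).1 (e k).2

variable (e : ℕ → T × T)

theorem mem_chainPrefix {k : ℕ} {t : T} :
    t ∈ hR.chainPrefix e k ↔ ∃ i < k, hR.chain e i = t := by
  induction k with
  | zero => simp [chainPrefix]
  | succ k ih =>
    simp [chainPrefix, ih, Nat.le_iff_lt_or_eq, or_and_right, exists_or, eq_comm, chain, or_comm]

theorem rel_chain {i j : ℕ} (hij : i < j) : R (hR.chain e i) (hR.chain e j) :=
  (hR.rel_next _ _ _).1 _ ((hR.mem_chainPrefix e).2 ⟨i, hij, rfl⟩)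

theorem rel_chain_iff [Std.Asymm R] {i j : ℕ} : R (hR.chain e i) (hR.chain e j) ↔ i < j :=
  (RelEmbedding.ofMonotone (r := (· < ·)) (hR.chain e) fun _ _ => hR.rel_chain e).map_rel_iff

theorem chain_injective [Std.Asymm R] : Injective (hR.chain e) :=
  (RelEmbedding.ofMonotone (r := (· < ·)) (hR.chain e) fun _ _ => hR.rel_chain e).injective

theorem exists_rel_chain_rel (he : Surjective e) {x y : T} (hyx : y ≠ x)
    (hy : y ∉ range (hR.chain e)) : ∃ k, R x (hR.chain e k) ∧ R (hR.chain e k) y := by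
  obtain ⟨k, hk⟩ := he (x, y)
  have hyk : y ∉ hR.chainPrefix e k := fun h =>
    hy (let ⟨i, _, hi⟩ := (hR.mem_chainPrefix e).1 h; ⟨i, hi⟩)
  obtain ⟨-, hx, hy⟩ := hR.rel_next (hR.chainPrefix e k) x y
  exact ⟨k, by simpa [chain, hk] using hx, by simpa [chain, hk] using hy hyx hyk⟩

/-- The chain is ordered like `ℕ`, and `ℕ` has no nontrivial order automorphism. -/
theorem apply_chain_eq_of_forall_mem_iff [Std.Asymm R] (f : R ≃r R)
    (hf : ∀ t, f t ∈ range (hR.chain e) ↔ t ∈ range (hR.chain e)) (k : ℕ) :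
    f (hR.chain e k) = hR.chain e k := by
  choose σ hσ using fun k => (hf (hR.chain e k)).2 ⟨k, rfl⟩
  have hmono : StrictMono σ := fun i j hij => by
    rw [← hR.rel_chain_iff e, hσ, hσ, f.map_rel_iff]
    exact hR.rel_chain e hij
  have hsurj : Surjective σ := fun m => by
    obtain ⟨k, hk⟩ := (hf (f.symm (hR.chain e m))).1 (by simp)
    exact ⟨k, hR.chain_injective e (by rw [hσ, hk, RelIso.apply_symm_apply])⟩
  have hid : σ = id := (hmono.range_inj strictMono_id).1 (by rw [hsurj.range_eq, range_id])
  rw [← hσ, hid, id]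

end HasExtensionProperty

theorem HasExtensionProperty.exists_rigid_set {R : T → T → Prop} [Std.Asymm R] [Countable T]
    (hR : HasExtensionProperty R) :
    ∃ D : Set T, ∀ f : R ≃r R, (∀ t, f t ∈ D ↔ t ∈ D) → f = RelIso.refl R := by
  have := hR.nontrivial
  obtain ⟨e, he⟩ := exists_surjective_nat (T × T)
  refine ⟨range (hR.chain e), fun f hf => RelIso.ext fun t => by_contra fun hne => ?_⟩
  have hfix := hR.apply_chain_eq_of_forall_mem_iff e f hf
  have ht : t ∉ range (hR.chain e) := fun ⟨k, hk⟩ => hne (hk ▸ hfix k)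
  obtain ⟨k, h₁, h₂⟩ := hR.exists_rel_chain_rel e he (Ne.symm hne) ht
  exact asymm h₁ (hfix k ▸ f.map_rel_iff.2 h₂)

section Wreath

variable {R : T → T → Prop} {g : T × α ≃ T × α}

theorem fst_apply_eq_of_map_rel [Std.Irrefl R] [Std.Trichotomous R]
    (hg : ∀ x y : T × α, R x.1 y.1 ↔ R (g x).1 (g y).1) (t : T) (a b : α) :
    (g (t, a)).1 = (g (t, b)).1 :=
  Std.Trichotomous.trichotomous _ _ (fun h => irrefl t ((hg (t, a) (t, b)).2 h))
    (fun h => irrefl t ((hg (t, b) (t, a)).2 h))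

theorem exists_relIso_fst_apply [Nonempty α] [Std.Asymm R] [Std.Trichotomous R]
    (hg : ∀ x y : T × α, R x.1 y.1 ↔ R (g x).1 (g y).1) :
    ∃ f : R ≃r R, ∀ v, (g v).1 = f v.1 := by
  obtain ⟨a₀⟩ := ‹Nonempty α›
  let f : R ↪r R := RelEmbedding.ofMonotone (fun t => (g (t, a₀)).1)
    fun t t' => (hg (t, a₀) (t', a₀)).1
  have hf (v : T × α) : (g v).1 = f v.1 := fst_apply_eq_of_map_rel hg v.1 v.2 a₀
  refine ⟨RelIso.ofSurjective f fun s => ⟨(g.symm (s, a₀)).1, ?_⟩, hf⟩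
  rw [← hf, Equiv.apply_symm_apply]

theorem exists_apply_eq_iff_of_fst_apply {κ : Type*} {c : T × α → κ} {π : T → T}
    (hπ : Injective π) (hgπ : ∀ v, (g v).1 = π v.1) (hc : ∀ v, c (g v) = c v) (t : T) (k : κ) :
    (∃ a, c (π t, a) = k) ↔ ∃ a, c (t, a) = k := by
  constructor
  · rintro ⟨a, rfl⟩
    have hw : g.symm (π t, a) = (t, (g.symm (π t, a)).2) :=
      Prod.ext (hπ (by rw [← hgπ, Equiv.apply_symm_apply])) rfl
    exact ⟨_, by rw [← hw, ← hc, Equiv.apply_symm_apply]⟩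
  · rintro ⟨a, rfl⟩
    have hv : g (t, a) = (π t, (g (t, a)).2) := Prod.ext (hgπ _) rfl
    exact ⟨_, by rw [← hv, hc]⟩

open Classical in
noncomputable def fiberColoring {n : ℕ} (D : Set T) (v : T × Fin n) : Fin (n + 1) :=
  if v.1 ∈ D then v.2.castSucc else v.2.succ

theorem fiberColoring_injective {n : ℕ} (D : Set T) (t : T) :
    Injective fun a : Fin n => fiberColoring D (t, a) := by
  by_cases ht : t ∈ D <;> simp [Injective, fiberColoring, ht]

theorem mem_iff_exists_fiberColoring_eq_zero {n : ℕ} [NeZero n] (D : Set T) (t : T) :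
    t ∈ D ↔ ∃ a : Fin n, fiberColoring D (t, a) = 0 := by
  by_cases ht : t ∈ D
  · exact iff_of_true ht ⟨0, by simp [fiberColoring, ht]⟩
  · exact iff_of_false ht fun ⟨a, ha⟩ => by simp [fiberColoring, ht] at ha

theorem HasExtensionProperty.exists_distinguishing_coloring [Std.Asymm R] [Std.Trichotomous R]
    [Countable T] (hR : HasExtensionProperty R) (n : ℕ) [NeZero n] :
    ∃ c : T × Fin n → Fin (n + 1), ∀ g : T × Fin n ≃ T × Fin n,
      (∀ x y : T × Fin n, R x.1 y.1 ↔ R (g x).1 (g y).1) → (∀ v, c (g v) = c v) → ∀ v, g v = v := by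
  obtain ⟨D, hD⟩ := hR.exists_rigid_set
  refine ⟨fiberColoring D, fun g hg hc v => ?_⟩
  obtain ⟨f, hf⟩ := exists_relIso_fst_apply hg
  have hfD : f = RelIso.refl R := hD f fun t => by
    simp only [mem_iff_exists_fiberColoring_eq_zero (n := n),
      exists_apply_eq_iff_of_fst_apply f.injective hf hc]
  have hfst (w : T × Fin n) : (g w).1 = w.1 := by rw [hf, hfD]; rfl
  have hv : g v = (v.1, (g v).2) := Prod.ext (hfst v) rfl
  exact Prod.ext (hfst v) (fiberColoring_injective D v.1 (hv ▸ hc v))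

theorem exists_ne_and_forall_comp_eq [Finite α] [Nonempty α] {π : R ≃r R} {t₀ : T}
    (ht₀ : π t₀ ≠ t₀) (c : T × α → α) :
    ∃ g : T × α ≃ T × α, (∀ x y : T × α, R x.1 y.1 ↔ R (g x).1 (g y).1) ∧
      (∃ v, g v ≠ v) ∧ ∀ v, c (g v) = c v := by
  classical
  by_cases hinj : ∀ t, Injective fun a => c (t, a)
  · -- Every fibre is coloured bijectively, so recolouring along `π` is an automorphism.
    let E t : α ≃ α := Equiv.ofBijective _ (Finite.injective_iff_bijective.1 (hinj t))
    refine ⟨π.toEquiv.prodShear fun t => (E t).trans (E (π t)).symm,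
      fun x y => π.map_rel_iff.symm, ⟨(t₀, Classical.arbitrary α), fun h => ht₀ congr(($h).1)⟩,
      fun v => ?_⟩
    exact (E (π v.1)).apply_symm_apply (E v.1 v.2)
  · obtain ⟨t, ht⟩ := not_forall.1 hinj
    obtain ⟨a, b, hab, hne⟩ : ∃ a b, c (t, a) = c (t, b) ∧ a ≠ b := by simpa [Injective] using ht
    refine ⟨Equiv.swap (t, a) (t, b), fun x y => ?_, ⟨(t, a), ?_⟩, Equiv.apply_swap_eq_self hab⟩
    · have hfst := Equiv.apply_swap_eq_self (v := Prod.fst) (i := (t, a)) (j := (t, b)) rfl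
      rw [hfst, hfst]
    · simpa using hne.symm

end Wreath

end

theorem random_tournament_wreath_In_distinguishing_number_general
    (n : ℕ) (hn : 2 ≤ n) (T : Type*) [Countable T]
    (R : T → T → Prop)
    (hirr : ∀ x, ¬ R x x)
    (htot : ∀ x y : T, x ≠ y → (R x y ↔ ¬ R y x))
    (hext : ∀ A B : Finset T, Disjoint A B →
      ∃ x, x ∉ A ∧ x ∉ B ∧ (∀ a ∈ A, R x a) ∧ (∀ b ∈ B, R b x)) :
    (∃ c : T × Fin n → Fin (n + 1),
      ∀ g : (T × Fin n) ≃ (T × Fin n),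
        (∀ x y : T × Fin n, R x.1 y.1 ↔ R (g x).1 (g y).1) →
        (∀ v, c (g v) = c v) → ∀ v, g v = v) ∧
    (∀ c : T × Fin n → Fin n,
      ∃ g : (T × Fin n) ≃ (T × Fin n),
        (∀ x y : T × Fin n, R x.1 y.1 ↔ R (g x).1 (g y).1) ∧
        (∃ v, g v ≠ v) ∧ ∀ v, c (g v) = c v) := by
  have : NeZero n := ⟨by omega⟩
  have : Std.Asymm R := ⟨fun a b hab => by
    rcases eq_or_ne a b with rfl | h
    exacts [(hirr a hab).elim, (htot a b h).1 hab]⟩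
  have : Std.Trichotomous R := ⟨fun a b hab hba => by_contra fun h => hab ((htot a b h).2 hba)⟩
  have hR : HasExtensionProperty R := hext
  have := hR.nontrivial
  obtain ⟨t₀, t₁, ht⟩ := exists_pair_ne T
  obtain ⟨π, hπ⟩ := HasExtensionProperty.exists_relIso_apply_eq hR hR t₀ t₁
  have hπt₀ : π t₀ ≠ t₀ := hπ ▸ ht.symm
  exact ⟨hR.exists_distinguishing_coloring n, exists_ne_and_forall_comp_eq hπt₀⟩

/-- For `n ≥ 2`, the distinguishing number of the wreath product
`𝕋^∞[Iₙ]` (the random tournament with each vertex replaced by an independent set of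
size `n`) is `n + 1`: there is a distinguishing coloring with `n+1` colors and none
with `n` colors. -/
theorem random_tournament_wreath_In_distinguishing_number
    (n : ℕ) (hn : 2 ≤ n) (T : Type*) [Countable T] [Infinite T]
    (R : T → T → Prop)
    (hirr : ∀ x, ¬ R x x)
    (htot : ∀ x y : T, x ≠ y → (R x y ↔ ¬ R y x))
    (hext : ∀ A B : Finset T, Disjoint A B →
      ∃ x, x ∉ A ∧ x ∉ B ∧ (∀ a ∈ A, R x a) ∧ (∀ b ∈ B, R b x)) :
    (∃ c : T × Fin n → Fin (n + 1),
      ∀ g : (T × Fin n) ≃ (T × Fin n),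
        (∀ x y : T × Fin n, R x.1 y.1 ↔ R (g x).1 (g y).1) →
        (∀ v, c (g v) = c v) → ∀ v, g v = v) ∧
    (∀ c : T × Fin n → Fin n,
      ∃ g : (T × Fin n) ≃ (T × Fin n),
        (∀ x y : T × Fin n, R x.1 y.1 ↔ R (g x).1 (g y).1) ∧
        (∃ v, g v ≠ v) ∧ ∀ v, c (g v) = c v) :=
  random_tournament_wreath_In_distinguishing_number_general n hn T R hirr htot hext
end

section
/- The distinguishing number of the cycle graph Cₙ is 3 for n ∈ {3,4,5} and 2 for every n ≥ 6: for n ≥ 6 there is a distinguishing coloring of Cₙ with 2 colors, while for n ∈ {3,4,5} there is a distinguishing coloring with 3 colors but for every 2-coloring there is a nontrivial automorphism preserving it. -/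
/-! Since an automorphism of `Cₙ` (`n ≥ 3`) maps the neighbours `x, x + 2` of `x + 1` to the two
distinct neighbours of its image, it has constant step `g (x + 1) - g x = ±1`; hence it is a
rotation `v ↦ a + v` or a reflection `v ↦ a - v`. Giving `0` and `1` their own colours therefore
forces the identity. For `n ≥ 6` the colour class `{0, 1, 3}` is preserved by no rotation or
reflection other than the identity. For `n ≤ 5` one class of a 2-colouring has at most two
elements, and a set `{x, y}` is preserved by the reflection `v ↦ x + y - v`. -/

/-- The cycle graph `Cₙ` on `Fin n`: `i` and `j` are adjacent iff they differ by `1`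
modulo `n`. -/
def cycleGraph' (n : ℕ) [NeZero n] : SimpleGraph (Fin n) where
  Adj i j := i ≠ j ∧ (i + 1 = j ∨ j + 1 = i)
  symm := ⟨fun i j ⟨h1, h2⟩ => ⟨h1.symm, h2.symm⟩⟩
  loopless := ⟨fun i ⟨h, _⟩ => h rfl⟩

open Finset
open scoped Fin.CommRing

def SimpleGraph.IsDistinguishing {V α : Type*} (G : SimpleGraph V) (c : V → α) : Prop :=
  ∀ g : G ≃g G, (∀ v, c (g v) = c v) → ∀ v, g v = v

section Reflection

variable {G : Type*} [AddCommGroup G]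

theorem sub_mem_pair_iff [DecidableEq G] (x y v : G) :
    x + y - v ∈ ({x, y} : Finset G) ↔ v ∈ ({x, y} : Finset G) := by
  simp only [mem_insert, mem_singleton]
  grind

theorem exists_sub_mem_iff_of_card_le_two [DecidableEq G] {S : Finset G} (hS : #S ≤ 2) :
    ∃ a : G, ∀ v, a - v ∈ S ↔ v ∈ S := by
  interval_cases h : #S
  · exact ⟨0, by simp [card_eq_zero.1 h]⟩
  · obtain ⟨x, rfl⟩ := card_eq_one.1 h
    exact ⟨x + x, by simpa using sub_mem_pair_iff x x⟩
  · obtain ⟨x, y, -, rfl⟩ := card_eq_two.1 h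
    exact ⟨x + y, sub_mem_pair_iff x y⟩

theorem exists_sub_invariant_of_card_le_five [Fintype G] (hG : Fintype.card G ≤ 5)
    (c : G → Fin 2) : ∃ a : G, ∀ v, c (a - v) = c v := by
  classical
  set S := univ.filter (c · = 0)
  obtain ⟨a, ha⟩ : ∃ a : G, ∀ v, a - v ∈ S ↔ v ∈ S := by
    rcases le_or_gt #S 2 with h | h
    · exact exists_sub_mem_iff_of_card_le_two h
    · obtain ⟨a, ha⟩ := exists_sub_mem_iff_of_card_le_two (S := Sᶜ) (by rw [card_compl]; omega)
      exact ⟨a, fun v => not_iff_not.1 (by simpa using ha v)⟩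
  refine ⟨a, fun v => ?_⟩
  have := ha v
  simp only [S, mem_filter, mem_univ, true_and] at this
  omega

end Reflection

namespace Fin

variable {n : ℕ} [NeZero n]

theorem one_ne_zero_of_two_le (hn : 2 ≤ n) : (1 : Fin n) ≠ 0 := by
  simp only [ne_eq, Fin.ext_iff, coe_ofNat_eq_mod]
  simp (disch := omega) only [Nat.mod_eq_of_lt]
  omega

theorem two_ne_zero_of_three_le (hn : 3 ≤ n) : (2 : Fin n) ≠ 0 := by
  simp only [ne_eq, Fin.ext_iff, coe_ofNat_eq_mod]
  simp (disch := omega) only [Nat.mod_eq_of_lt]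
  omega

end Fin

namespace cycleGraph'

variable {n : ℕ} [NeZero n]

theorem eq_add_one_or_eq_sub_one_of_adj {v w : Fin n} (h : (cycleGraph' n).Adj v w) :
    w = v + 1 ∨ w = v - 1 :=
  h.2.imp Eq.symm eq_sub_of_add_eq

theorem adj_add_one (hn : 2 ≤ n) (v : Fin n) : (cycleGraph' n).Adj v (v + 1) :=
  ⟨fun h => Fin.one_ne_zero_of_two_le hn (by simpa using h), Or.inl rfl⟩

def reflection (a : Fin n) : cycleGraph' n ≃g cycleGraph' n where
  toFun v := a - v
  invFun v := a - v
  left_inv := sub_sub_cancel a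
  right_inv := sub_sub_cancel a
  map_rel_iff' {v w} := by
    have h₁ : a - v + 1 = a - w ↔ w + 1 = v := by
      constructor <;> intro h <;> linear_combination h
    have h₂ : a - w + 1 = a - v ↔ v + 1 = w := by
      constructor <;> intro h <;> linear_combination h
    change (a - v ≠ a - w ∧ (a - v + 1 = a - w ∨ a - w + 1 = a - v)) ↔
      (v ≠ w ∧ (v + 1 = w ∨ w + 1 = v))
    rw [ne_eq, sub_right_inj, h₁, h₂, or_comm]

@[simp]
theorem reflection_apply (a v : Fin n) : reflection a v = a - v := rfl

theorem exists_reflection_apply_ne (hn : 3 ≤ n) (a : Fin n) : ∃ v, reflection a v ≠ v := by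
  by_cases ha : a = 0
  · refine ⟨1, fun h => Fin.two_ne_zero_of_three_le hn ?_⟩
    rw [reflection_apply, ha] at h
    linear_combination -h
  · exact ⟨0, by simpa using ha⟩

variable (g : cycleGraph' n ≃g cycleGraph' n)

theorem map_add_one_add_one_sub (hn : 3 ≤ n) (x : Fin n) :
    g (x + 1 + 1) - g (x + 1) = g (x + 1) - g x := by
  have hne : g (x + 1 + 1) ≠ g x := fun h =>
    Fin.two_ne_zero_of_three_le hn (by linear_combination g.injective h)
  rcases eq_add_one_or_eq_sub_one_of_adj (g.map_adj_iff.2 (adj_add_one (by omega) (x + 1)))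
    with h₂ | h₂ <;>
  rcases eq_add_one_or_eq_sub_one_of_adj (g.map_adj_iff.2 (adj_add_one (by omega) x).symm)
    with h₀ | h₀
  · exact absurd (h₂.trans h₀.symm) hne
  · rw [h₂, h₀]; ring
  · rw [h₂, h₀]; ring
  · exact absurd (h₂.trans h₀.symm) hne

theorem map_eq_add_mul (hn : 3 ≤ n) (v : Fin n) : g v = g 0 + v * (g 1 - g 0) := by
  suffices ∀ k : ℕ, g k = g 0 + k * (g 1 - g 0) by simpa using this v
  intro k
  induction k using Nat.twoStepInduction with
  | zero => simp
  | one => simp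
  | more k ih₀ ih₁ =>
    have := map_add_one_add_one_sub g hn k
    push_cast at ih₁ ⊢
    rw [show (k : Fin n) + 2 = k + 1 + 1 by ring]
    linear_combination this + 2 * ih₁ - ih₀

theorem eq_of_map_zero_of_map_one (hn : 3 ≤ n) (h₀ : g 0 = 0) (h₁ : g 1 = 1) (v : Fin n) :
    g v = v := by
  rw [map_eq_add_mul g hn, h₀, h₁]
  ring

theorem map_eq_add_or_map_eq_sub (hn : 3 ≤ n) :
    (∀ v, g v = g 0 + v) ∨ (∀ v, g v = g 0 - v) := by
  have h01 : (cycleGraph' n).Adj (g 0) (g 1) :=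
    g.map_adj_iff.2 (by simpa using adj_add_one (n := n) (by omega) 0)
  rcases eq_add_one_or_eq_sub_one_of_adj h01 with h | h
  · exact .inl fun v => by rw [map_eq_add_mul g hn, h]; ring
  · exact .inr fun v => by rw [map_eq_add_mul g hn, h]; ring

theorem exists_isDistinguishing_three_coloring (hn : 3 ≤ n) :
    ∃ c : Fin n → Fin 3, (cycleGraph' n).IsDistinguishing c := by
  refine ⟨fun v => if v = 0 then 0 else if v = 1 then 1 else 2, fun g hg => ?_⟩
  have h10 := Fin.one_ne_zero_of_two_le (n := n) (by omega)
  have h₀ : g 0 = 0 := by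
    have := hg 0
    dsimp only at this
    split_ifs at this <;> simp_all
  have h₁ : g 1 = 1 := by
    have := hg 1
    dsimp only at this
    split_ifs at this <;> simp_all
  exact eq_of_map_zero_of_map_one g hn h₀ h₁

theorem exists_isDistinguishing_two_coloring (hn : 6 ≤ n) :
    ∃ c : Fin n → Fin 2, (cycleGraph' n).IsDistinguishing c := by
  obtain ⟨S, hS_def⟩ : ∃ S : Finset (Fin n), S = {0, 1, 3} := ⟨_, rfl⟩
  refine ⟨fun v => if v ∈ S then 1 else 0, fun g hg => ?_⟩
  have hS (v : Fin n) : g v ∈ S ↔ v ∈ S := by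
    have := hg v
    dsimp only at this
    split_ifs at this <;> simp_all
  have hS₀ : g 0 ∈ S := (hS 0).2 (by simp [hS_def])
  have hS₁ : g 1 ∈ S := (hS 1).2 (by simp [hS_def])
  have hS₃ : g 3 ∈ S := (hS 3).2 (by simp [hS_def])
  have hnot : (2 : Fin n) ∉ S ∧ (4 : Fin n) ∉ S ∧ (-1 : Fin n) ∉ S ∧ (-2 : Fin n) ∉ S := by
    simp only [hS_def, mem_insert, mem_singleton, Fin.ext_iff, Fin.val_neg',
      Fin.coe_ofNat_eq_mod]
    simp (disch := omega) only [Nat.mod_eq_of_lt]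
    omega
  simp only [hS_def, mem_insert, mem_singleton] at hS₀
  rcases map_eq_add_or_map_eq_sub g (by omega) with h | h <;> rcases hS₀ with h₀ | h₀ | h₀
  · exact fun v => by rw [h, h₀, zero_add]
  · exact absurd (by convert hS₁ using 1; rw [h, h₀]; ring) hnot.1
  · exact absurd (by convert hS₁ using 1; rw [h, h₀]; ring) hnot.2.1
  · exact absurd (by convert hS₁ using 1; rw [h, h₀]; ring) hnot.2.2.1
  · exact absurd (by convert hS₃ using 1; rw [h, h₀]; ring) hnot.2.2.2
  · exact absurd (by convert hS₁ using 1; rw [h, h₀]; ring) hnot.1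

end cycleGraph'

/-- The distinguishing number of the cycle `Cₙ` is 3 for `n ∈ {3,4,5}`
and 2 for `n ≥ 6`. -/
theorem distinguishing_number_cycle (n : ℕ) [NeZero n] :
    ((n = 3 ∨ n = 4 ∨ n = 5) →
      (∃ c : Fin n → Fin 3,
        ∀ g : cycleGraph' n ≃g cycleGraph' n, (∀ v, c (g v) = c v) → ∀ v, g v = v) ∧
      (∀ c : Fin n → Fin 2,
        ∃ g : cycleGraph' n ≃g cycleGraph' n, (∃ v, g v ≠ v) ∧ ∀ v, c (g v) = c v)) ∧
    (6 ≤ n →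
      (∃ c : Fin n → Fin 2,
        ∀ g : cycleGraph' n ≃g cycleGraph' n, (∀ v, c (g v) = c v) → ∀ v, g v = v) ∧
      (∃ g : cycleGraph' n ≃g cycleGraph' n, ∃ v, g v ≠ v)) := by
  refine ⟨fun hn => ?_, fun hn => ?_⟩
  · have h3 : 3 ≤ n := by omega
    refine ⟨cycleGraph'.exists_isDistinguishing_three_coloring h3, fun c => ?_⟩
    obtain ⟨a, ha⟩ := exists_sub_invariant_of_card_le_five (by rw [Fintype.card_fin]; omega) c
    exact ⟨cycleGraph'.reflection a, cycleGraph'.exists_reflection_apply_ne h3 a, ha⟩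
  · exact ⟨cycleGraph'.exists_isDistinguishing_two_coloring hn,
      cycleGraph'.reflection 0, cycleGraph'.exists_reflection_apply_ne (by omega) 0⟩
end
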